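/- Let A be a real d×d matrix with nonnegative entries. Then tr(exp(A)) = d if and only if the directed graph with adjacency A (edge j→i whenever A_{ij} > 0) has no directed cycle of any length, i.e., A represents a DAG. -/

import Mathlib

/-!
The exponential series gives `tr (exp A) = ∑ₖ tr (Aᵏ) / k!`, a series of nonnegative terms whose
`k = 0` term is `d`; so `tr (exp A) = d` exactly when `tr (Aᵏ) = 0` for every `k ≥ 1`. For a
nonnegative matrix, `(Aᵏ)ᵢᵢ > 0` iff some closed walk of length `k` through `i` uses only positive
entries, hence `tr (Aᵏ) > 0` for some `k ≥ 1` iff the graph of `A` has a directed cycle.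
-/

open Matrix

theorem HasSum.eq_apply_zero_iff_of_nonneg {α : Type*} [AddCommGroup α] [PartialOrder α]
    [IsOrderedAddMonoid α] [TopologicalSpace α] [IsTopologicalAddGroup α] [OrderClosedTopology α]
    {f : ℕ → α} {s : α} (hf : HasSum f s) (h : ∀ n, 0 ≤ f n) :
    s = f 0 ↔ ∀ n, f (n + 1) = 0 := by
  rw [← hasSum_nat_add_iff' 1, Finset.sum_range_one] at hf
  constructor
  · rintro rfl
    rw [sub_self] at hf
    exact congrFun ((hasSum_zero_iff_of_nonneg fun n => h _).1 hf)
  · intro htail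
    have : HasSum (fun n => f (n + 1)) 0 := by simp [htail]
    exact sub_eq_zero.1 (hf.unique this)

namespace Quiver

theorem nonempty_path_length_eq_iff_exists_seq {V : Type*} [Quiver V] {a : V} (k : ℕ) (b : V) :
    Nonempty {p : Path a b // p.length = k} ↔
      ∃ v : ℕ → V, v 0 = a ∧ v k = b ∧ ∀ j < k, Nonempty (v j ⟶ v (j + 1)) := by
  induction k generalizing b with
  | zero =>
    constructor
    · rintro ⟨p, hp⟩
      exact ⟨fun _ => a, rfl, p.eq_of_length_zero hp, by simp⟩
    · rintro ⟨v, rfl, rfl, -⟩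
      exact ⟨⟨Path.nil, rfl⟩⟩
  | succ k ih =>
    constructor
    · rintro ⟨p, hp⟩
      cases p with
      | nil => simp at hp
      | cons q e =>
        obtain ⟨v, h0, hk, hv⟩ := (ih _).1 ⟨q, by simpa using hp⟩
        refine ⟨fun j => if j ≤ k then v j else b, by simpa using h0, by simp, fun j hj => ?_⟩
        rcases (Nat.lt_succ_iff.1 hj).lt_or_eq with hj | rfl
        · simpa [hj.le, Nat.succ_le_of_lt hj] using hv j hj
        · simpa [hk] using ⟨e⟩
    · rintro ⟨v, h0, rfl, hv⟩
      obtain ⟨⟨p, hp⟩⟩ := (ih (v k)).2 ⟨v, h0, rfl, fun j hj => hv j (by omega)⟩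
      obtain ⟨e⟩ := hv k k.lt_succ_self
      exact ⟨⟨p.cons e, by simp [hp]⟩⟩

end Quiver

namespace Matrix

variable {n R : Type*} [Fintype n] [DecidableEq n]

theorem trace_pow_nonneg [Semiring R] [PartialOrder R] [IsOrderedRing R] {A : Matrix n n R}
    (hA : ∀ i j, 0 ≤ A i j) (k : ℕ) : 0 ≤ (A ^ k).trace :=
  Finset.sum_nonneg fun i _ => pow_apply_nonneg hA k i i

variable [CommRing R] [LinearOrder R] [IsStrictOrderedRing R] {A : Matrix n n R}

theorem pow_apply_pos_iff_exists_walk (hA : ∀ i j, 0 ≤ A i j) (k : ℕ) (a b : n) :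
    0 < (A ^ k) b a ↔ ∃ v : ℕ → n, v 0 = a ∧ v k = b ∧ ∀ j < k, 0 < A (v (j + 1)) (v j) := by
  -- `toQuiver A` has an edge `i ⟶ j` when `0 < A i j`, against the orientation of our walks.
  let := toQuiver Aᵀ
  rw [show (A ^ k) b a = (Aᵀ ^ k) a b by rw [← transpose_pow]; rfl,
    pow_apply_pos_iff_nonempty_path (A := Aᵀ) (fun i j => hA j i),
    Quiver.nonempty_path_length_eq_iff_exists_seq]
  exact exists_congr fun v => and_congr_right' <| and_congr_right' <|
    forall₂_congr fun j _ => ⟨fun ⟨e⟩ => e.down, fun h => ⟨⟨h⟩⟩⟩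

theorem trace_pow_pos_iff_exists_closed_walk (hA : ∀ i j, 0 ≤ A i j) (k : ℕ) :
    0 < (A ^ k).trace ↔ ∃ v : ℕ → n, v k = v 0 ∧ ∀ j < k, 0 < A (v (j + 1)) (v j) := by
  simp only [trace, diag_apply, Finset.sum_pos_iff_of_nonneg (fun i _ => pow_apply_nonneg hA k i i),
    Finset.mem_univ, true_and, pow_apply_pos_iff_exists_walk hA]
  constructor
  · rintro ⟨a, v, h0, hk, hv⟩
    exact ⟨v, hk.trans h0.symm, hv⟩
  · rintro ⟨v, hk, hv⟩
    exact ⟨v 0, v, rfl, hk, hv⟩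

open Nat in
theorem hasSum_trace_exp (A : Matrix n n ℝ) :
    HasSum (fun k => (k !⁻¹ : ℝ) * (A ^ k).trace) (NormedSpace.exp A).trace := by
  let : NormedRing (Matrix n n ℝ) := Matrix.linftyOpNormedRing
  let : NormedAlgebra ℝ (Matrix n n ℝ) := Matrix.linftyOpNormedAlgebra
  have h := (NormedSpace.exp_series_hasSum_exp' (𝕂 := ℝ) A).map (traceAddMonoidHom n ℝ)
    continuous_id.matrix_trace
  simp only [Function.comp_def, traceAddMonoidHom_apply, trace_smul, smul_eq_mul] at h
  exact h

end Matrix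

open Nat in
theorem trace_exp_eq_card_iff_dag {d : ℕ} (A : Matrix (Fin d) (Fin d) ℝ)
    (hA : ∀ i j, 0 ≤ A i j) :
    (NormedSpace.exp A).trace = d ↔
      ¬ ∃ k : ℕ, 1 ≤ k ∧ ∃ i : ℕ → Fin d, i k = i 0 ∧ ∀ j < k, 0 < A (i (j + 1)) (i j) := by
  have hterm (k : ℕ) : 0 ≤ (k !⁻¹ : ℝ) * (A ^ k).trace :=
    mul_nonneg (by positivity) (trace_pow_nonneg hA k)
  have hzero : (0 !⁻¹ : ℝ) * (A ^ 0).trace = d := by simp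
  rw [← hzero, (hasSum_trace_exp A).eq_apply_zero_iff_of_nonneg hterm]
  have hterm_eq_zero (k : ℕ) : (k !⁻¹ : ℝ) * (A ^ k).trace = 0 ↔ (A ^ k).trace = 0 :=
    mul_eq_zero_iff_left (by positivity)
  simp only [hterm_eq_zero]
  constructor
  · rintro htrace ⟨k, hk, v, hv⟩
    obtain ⟨k, rfl⟩ := Nat.exists_eq_add_of_le' hk
    exact (trace_pow_pos_iff_exists_closed_walk hA _).2 ⟨v, hv⟩ |>.ne' (htrace k)
  · intro hacyclic k
    by_contra hne
    exact hacyclic ⟨k + 1, k.succ_pos,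
      (trace_pow_pos_iff_exists_closed_walk hA _).1 ((trace_pow_nonneg hA _).lt_of_ne' hne)⟩
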